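/- arXiv:0904.2751 — 6 statements merged into one kernel-verified Lean document; each statement's English description precedes it below -/
import Mathlib

section
/- For a balanced, feasible clause φ: {-1,+1}^k → {0,1}, the influence I₁(φ) = (1-‖φ‖²)/2 and hence every variable has the same influence. -/
open Finset

theorem stmt4 (k : ℕ) (hk : 1 ≤ k) (φ : (Fin k → Bool) → ℝ)
    (hval : ∀ x, φ x = 0 ∨ φ x = 1)
    (hbal : ∀ x, φ (fun i => !(x i)) = φ x)
    (hfeas : ∀ (i : Fin k) (x : Fin k → Bool),
      φ (Function.update x i true) = 1 ∨ φ (Function.update x i false) = 1) :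
    ∀ i : Fin k,
      (2 : ℝ)⁻¹ ^ k * ∑ x : Fin k → Bool,
        ((φ (Function.update x i true) - φ (Function.update x i false)) / 2) ^ 2
      = (1 - (2 : ℝ)⁻¹ ^ k * ∑ x : Fin k → Bool, φ x ^ 2) / 2 := by
  intro i
  set a : (Fin k → Bool) → ℝ := fun x => φ (Function.update x i true) with ha
  set b : (Fin k → Bool) → ℝ := fun x => φ (Function.update x i false) with hb
  have hpt : ∀ x, ((a x - b x) / 2) ^ 2 = (2 - a x - b x) / 4 := by
    intro x
    have h1 := hval (Function.update x i true)
    have h2 := hval (Function.update x i false)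
    have h3 := hfeas i x
    simp only [ha, hb]
    rcases h3 with h | h <;> rw [h] <;>
      [rcases h2 with h' | h'; rcases h1 with h' | h'] <;> rw [h'] <;> norm_num
  have hinv : Function.Involutive (fun x : Fin k → Bool => Function.update x i (!(x i))) := by
    intro x
    funext j
    by_cases hj : j = i
    · subst hj; simp
    · simp [Function.update_of_ne hj]
  have hflip : ∑ x : Fin k → Bool, φ (Function.update x i (!(x i)))
      = ∑ x : Fin k → Bool, φ x := by
    exact Fintype.sum_bijective _ hinv.bijective _ _ (fun x => rfl)
  have hsum : ∑ x : Fin k → Bool, (a x + b x) = 2 * ∑ x : Fin k → Bool, φ x := by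
    have h1 : ∀ x : Fin k → Bool,
        a x + b x = φ x + φ (Function.update x i (!(x i))) := by
      intro x
      have hx : Function.update x i (x i) = x := Function.update_eq_self i x
      cases hxi : x i with
      | false => rw [hxi] at hx; simp only [ha, hb, hxi, Bool.not_false, hx]; ring
      | true => rw [hxi] at hx; simp only [ha, hb, hxi, Bool.not_true, hx]
    rw [Finset.sum_congr rfl (fun x _ => h1 x), Finset.sum_add_distrib, hflip]
    ring
  have hsq : ∑ x : Fin k → Bool, φ x = ∑ x : Fin k → Bool, φ x ^ 2 := by
    apply Finset.sum_congr rfl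
    intro x _
    rcases hval x with h | h <;> rw [h] <;> norm_num
  have hcard : ((Finset.univ : Finset (Fin k → Bool)).card : ℝ) = 2 ^ k := by
    simp [Finset.card_univ]
  have h2k : (2 : ℝ)⁻¹ ^ k * (2 : ℝ) ^ k = 1 := by
    rw [← mul_pow]; norm_num
  have key : ∑ x : Fin k → Bool, ((2 : ℝ) - a x - b x)
      = 2 * 2 ^ k - 2 * ∑ x : Fin k → Bool, φ x := by
    simp only [sub_sub, Finset.sum_sub_distrib, Finset.sum_const, nsmul_eq_mul, hcard, hsum]
    ring
  rw [Finset.sum_congr rfl (fun x _ => hpt x), ← Finset.sum_div, key, ← hsq]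
  linear_combination ((1 : ℝ) / 2) * h2k
end

section
/- If X is a consistent random variable on [-1,1], then E[|X|] ≤ (E[X])^{1/2}. -/
/-! Testing consistency against `f x = (1 + x)²` gives `E[(1 - X)²] = E[(1 - X)(1 + X)]`, i.e.
`E[X²] = E[X]`; the weight `(1 - x)/(1 + x)` needs no care at `x = -1`, since `a / b * b² = a * b`
holds also for `b = 0`. Jensen's inequality `E[|X|]² ≤ E[X²]` then finishes. -/

open MeasureTheory ProbabilityTheory

lemma div_mul_sq {K : Type*} [Field K] (a b : K) : a / b * b ^ 2 = a * b := by
  rcases eq_or_ne b 0 with rfl | hb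
  · simp
  · field_simp

lemma sq_integral_abs_le_integral_sq {Ω : Type*} [MeasurableSpace Ω] {μ : Measure Ω}
    [IsProbabilityMeasure μ] {X : Ω → ℝ} (hX : MemLp X 2 μ) :
    (∫ ω, |X ω| ∂μ) ^ 2 ≤ ∫ ω, X ω ^ 2 ∂μ := by
  have hvar := variance_eq_sub hX.abs
  simp only [Pi.pow_apply, Pi.abs_apply, sq_abs] at hvar
  linarith [variance_nonneg |X| μ]

lemma integral_sq_eq_integral_of_consistent {Ω : Type*} [MeasurableSpace Ω] {μ : Measure Ω}
    [IsProbabilityMeasure μ] {X : Ω → ℝ} (hX : Measurable X)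
    (hrange : ∀ ω, X ω ∈ Set.Icc (-1 : ℝ) 1)
    (hcons : ∀ f : ℝ → ℝ, Measurable f → (∃ C, ∀ x, |f x| ≤ C) →
      ∫ ω, f (-(X ω)) ∂μ = ∫ ω, (1 - X ω) / (1 + X ω) * f (X ω) ∂μ) :
    ∫ ω, X ω ^ 2 ∂μ = ∫ ω, X ω ∂μ := by
  have hbound : ∀ᵐ ω ∂μ, ‖X ω‖ ≤ 1 := .of_forall fun ω => abs_le.2 (hrange ω)
  have hXint : Integrable X μ := .of_bound hX.aestronglyMeasurable 1 hbound
  have hXsq : Integrable (fun ω => X ω ^ 2) μ :=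
    (MemLp.of_bound hX.aestronglyMeasurable 1 hbound).integrable_sq
  have hsq_le : ∀ ω, (1 + X ω) ^ 2 ≤ 4 ∧ (1 - X ω) ^ 2 ≤ 4 := fun ω => by
    obtain ⟨h₁, h₂⟩ := hrange ω
    constructor <;> nlinarith
  -- `min · 4` only makes the test function bounded; it is inactive on `[-1, 1]`.
  have htest := hcons (fun x => min ((1 + x) ^ 2) 4) (by fun_prop)
    ⟨4, fun x => abs_le.2 ⟨le_min (by nlinarith [sq_nonneg (1 + x)]) (by norm_num),
      min_le_right _ _⟩⟩
  simp only [fun ω => min_eq_left (hsq_le ω).1, ← sub_eq_add_neg,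
    fun ω => min_eq_left (hsq_le ω).2, div_mul_sq] at htest
  have hL : Integrable (fun ω => (1 - X ω) ^ 2) μ :=
    .of_bound (by fun_prop) 4 (.of_forall fun ω => by
      rw [Real.norm_of_nonneg (sq_nonneg _)]; exact (hsq_le ω).2)
  have hR : Integrable (fun ω => (1 - X ω) * (1 + X ω)) μ :=
    .of_bound (by fun_prop) 1 (.of_forall fun ω => by
      obtain ⟨h₁, h₂⟩ := hrange ω
      rw [Real.norm_eq_abs, abs_le]; constructor <;> nlinarith [sq_nonneg (X ω)])
  have hdiff : ∫ ω, (X ω ^ 2 - X ω) ∂μ = 0 := by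
    calc ∫ ω, (X ω ^ 2 - X ω) ∂μ
        = ∫ ω, 2⁻¹ * ((1 - X ω) ^ 2 - (1 - X ω) * (1 + X ω)) ∂μ := by
          congr 1; ext ω; ring
      _ = 0 := by rw [integral_const_mul, integral_sub hL hR, htest, sub_self, mul_zero]
  rwa [integral_sub hXsq hXint, sub_eq_zero] at hdiff

theorem stmt8 {Ω : Type*} [MeasurableSpace Ω] (μ : Measure Ω)
    [IsProbabilityMeasure μ] (X : Ω → ℝ) (hX : Measurable X)
    (hrange : ∀ ω, X ω ∈ Set.Icc (-1 : ℝ) 1)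
    (hcons : ∀ f : ℝ → ℝ, Measurable f → (∃ C, ∀ x, |f x| ≤ C) →
      ∫ ω, f (-(X ω)) ∂μ = ∫ ω, (1 - X ω) / (1 + X ω) * f (X ω) ∂μ) :
    ∫ ω, |X ω| ∂μ ≤ Real.sqrt (∫ ω, X ω ∂μ) := by
  have hL2 : MemLp X 2 μ :=
    .of_bound hX.aestronglyMeasurable 1 (.of_forall fun ω => abs_le.2 (hrange ω))
  apply Real.le_sqrt_of_sq_le
  rw [← integral_sq_eq_integral_of_consistent hX hrange hcons]
  exact sq_integral_abs_le_integral_sq hL2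
end

section
/- If X is a consistent random variable on [-1,1] and f: [-1,1] → [0,1] is an even function, then |E[X f(X)]| ≤ E[X] (in particular E[X] ≥ 0). -/
open MeasureTheory

theorem stmt9 {Ω : Type*} [MeasurableSpace Ω] (μ : Measure Ω)
    [IsProbabilityMeasure μ] (X : Ω → ℝ) (hX : Measurable X)
    (hrange : ∀ ω, X ω ∈ Set.Icc (-1 : ℝ) 1)
    (hcons : ∀ g : ℝ → ℝ, Measurable g → (∃ C, ∀ x, |g x| ≤ C) →
      ∫ ω, g (-(X ω)) ∂μ = ∫ ω, (1 - X ω) / (1 + X ω) * g (X ω) ∂μ)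
    (f : ℝ → ℝ) (hf : Measurable f)
    (hfeven : ∀ x, f (-x) = f x)
    (hf01 : ∀ x, f x ∈ Set.Icc (0 : ℝ) 1) :
    |∫ ω, X ω * f (X ω) ∂μ| ≤ ∫ ω, X ω ∂μ := by
  have hint : ∀ (h : Ω → ℝ) (C : ℝ), Measurable h → (∀ ω, |h ω| ≤ C) → Integrable h μ := by
    intro h C hm hb
    exact (integrable_const C).mono' hm.aestronglyMeasurable
      (ae_of_all _ (by simpa [Real.norm_eq_abs] using hb))
  -- key identity
  have key : ∀ (f : ℝ → ℝ), Measurable f → (∀ x, f (-x) = f x) →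
      (∀ x, f x ∈ Set.Icc (0:ℝ) 1) →
      ∫ ω, X ω * f (X ω) ∂μ
        = ∫ ω, (if 0 ≤ X ω then 2*(X ω)^2*(f (X ω))/(1+X ω) else 0) ∂μ := by
    intro f hf hfeven hf01
    set g : ℝ → ℝ := fun x => if 0 ≤ x then (min x 1) * f x else 0 with hgdef
    have hg_meas : Measurable g :=
      Measurable.ite (measurableSet_le measurable_const measurable_id)
        ((measurable_id.min measurable_const).mul hf) measurable_const
    have hg_bound : ∀ x, |g x| ≤ 1 := by
      intro x
      simp only [hgdef]
      split_ifs with h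
      · have h1 : 0 ≤ min x 1 := le_min h zero_le_one
        have h2 : min x 1 ≤ 1 := min_le_right _ _
        rw [abs_of_nonneg (mul_nonneg h1 (hf01 x).1)]
        nlinarith [(hf01 x).1, (hf01 x).2]
      · simp
    have hc := hcons g hg_meas ⟨1, hg_bound⟩
    have hi1 : Integrable (fun ω => g (X ω)) μ :=
      hint _ 1 (hg_meas.comp hX) (fun ω => hg_bound _)
    have hi2 : Integrable (fun ω => g (-(X ω))) μ :=
      hint _ 1 (hg_meas.comp hX.neg) (fun ω => hg_bound _)
    have hi3 : Integrable (fun ω => (1 - X ω) / (1 + X ω) * g (X ω)) μ := by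
      apply hint _ 1 (((measurable_const.sub hX).div (measurable_const.add hX)).mul
        (hg_meas.comp hX))
      intro ω
      obtain ⟨ha, hb⟩ := hrange ω
      by_cases h0 : 0 ≤ X ω
      · have hd : (0:ℝ) < 1 + X ω := by linarith
        have hr1 : |(1 - X ω) / (1 + X ω)| ≤ 1 := by
          rw [abs_div, abs_of_nonneg (by linarith : (0:ℝ) ≤ 1 - X ω),
            abs_of_pos hd, div_le_one hd]
          linarith
        calc |(1 - X ω) / (1 + X ω) * g (X ω)| = |(1 - X ω) / (1 + X ω)| * |g (X ω)| :=
              abs_mul _ _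
          _ ≤ 1 * 1 := mul_le_mul hr1 (hg_bound _) (abs_nonneg _) zero_le_one
          _ = 1 := by ring
      · have : g (X ω) = 0 := by simp only [hgdef]; rw [if_neg h0]
        simp [this]
    have hpt : ∀ ω, X ω * f (X ω) = g (X ω) - g (-(X ω)) := by
      intro ω
      obtain ⟨ha, hb⟩ := hrange ω
      simp only [hgdef]
      rw [min_eq_left hb, min_eq_left (by linarith : -X ω ≤ 1), hfeven]
      split_ifs with h1 h2 h3
      · have : X ω = 0 := le_antisymm (by linarith) h1
        rw [this]; ring
      · ring
      · ring
      · exfalso; push_neg at h1 h3; linarith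
    calc ∫ ω, X ω * f (X ω) ∂μ
        = ∫ ω, (g (X ω) - g (-(X ω))) ∂μ := by
          exact integral_congr_ae (ae_of_all _ hpt)
      _ = (∫ ω, g (X ω) ∂μ) - ∫ ω, g (-(X ω)) ∂μ := integral_sub hi1 hi2
      _ = (∫ ω, g (X ω) ∂μ) - ∫ ω, (1 - X ω) / (1 + X ω) * g (X ω) ∂μ := by rw [hc]
      _ = ∫ ω, (g (X ω) - (1 - X ω) / (1 + X ω) * g (X ω)) ∂μ := (integral_sub hi1 hi3).symm
      _ = ∫ ω, (if 0 ≤ X ω then 2*(X ω)^2*(f (X ω))/(1+X ω) else 0) ∂μ := by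
          apply integral_congr_ae (ae_of_all _ _)
          intro ω
          obtain ⟨ha, hb⟩ := hrange ω
          simp only [hgdef]
          by_cases h0 : 0 ≤ X ω
          · rw [if_pos h0, if_pos h0, min_eq_left hb]
            have hd : (1 + X ω) ≠ 0 := by positivity
            field_simp
            ring
          · rw [if_neg h0, if_neg h0]; ring
  have h1 := key f hf hfeven hf01
  have h2 := key (fun _ => 1) measurable_const (fun _ => rfl)
    (fun _ => ⟨zero_le_one, le_refl 1⟩)
  simp only [mul_one] at h2
  -- measurability & bounds for the two indicator functions
  have hFmeas : ∀ (f : ℝ → ℝ), Measurable f →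
      Measurable (fun ω => if 0 ≤ X ω then 2*(X ω)^2*(f (X ω))/(1+X ω) else 0) := by
    intro f hf
    exact Measurable.ite (measurableSet_le measurable_const hX)
      (((measurable_const.mul (hX.pow_const 2)).mul (hf.comp hX)).div
        (measurable_const.add hX)) measurable_const
  have hFbd : ∀ (f : ℝ → ℝ), (∀ x, f x ∈ Set.Icc (0:ℝ) 1) →
      ∀ ω, |if 0 ≤ X ω then 2*(X ω)^2*(f (X ω))/(1+X ω) else 0| ≤ 2 := by
    intro f hf01 ω
    obtain ⟨ha, hb⟩ := hrange ω
    by_cases h0 : 0 ≤ X ω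
    · rw [if_pos h0]
      have hnum : (0:ℝ) ≤ 2*(X ω)^2*(f (X ω)) := by
        have := (hf01 (X ω)).1; positivity
      have hd : (1:ℝ) ≤ 1 + X ω := by linarith
      rw [abs_of_nonneg (div_nonneg hnum (by linarith))]
      calc 2*(X ω)^2*(f (X ω))/(1+X ω) ≤ 2*(X ω)^2*(f (X ω)) := div_le_self hnum hd
        _ ≤ 2 := by nlinarith [(hf01 (X ω)).1, (hf01 (X ω)).2]
    · rw [if_neg h0]; simp
  have hintf := hint _ 2 (hFmeas f hf) (hFbd f hf01)
  have hint1 : Integrable (fun ω => if 0 ≤ X ω then 2*(X ω)^2/(1+X ω) else 0) μ := by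
    have := hint _ 2 (hFmeas (fun _ => 1) measurable_const)
      (hFbd (fun _ => 1) (fun _ => ⟨zero_le_one, le_refl 1⟩))
    simpa using this
  have hnn : 0 ≤ ∫ ω, (if 0 ≤ X ω then 2*(X ω)^2*(f (X ω))/(1+X ω) else 0) ∂μ := by
    apply integral_nonneg
    intro ω
    simp only [Pi.zero_apply]
    by_cases h0 : 0 ≤ X ω
    · rw [if_pos h0]
      have := (hf01 (X ω)).1
      positivity
    · rw [if_neg h0]
  rw [h1, h2, abs_of_nonneg hnn]
  apply integral_mono hintf hint1
  intro ω
  by_cases h0 : 0 ≤ X ω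
  · simp only [if_pos h0]
    have hd : (0:ℝ) < 1 + X ω := by linarith
    exact (div_le_div_iff_of_pos_right hd).mpr (by nlinarith [(hf01 (X ω)).2, sq_nonneg (X ω)])
  · simp only [if_neg h0]; exact le_refl 0
end

section
/- The equation u = (k-1) log(1+u) has a unique solution u > 0 for every integer k ≥ 3, and as k → ∞ the quantity α* = Ω_k (1 + u(1+1/u)^{k-2})/(k(k-1)) satisfies α* = (Ω_k/k)(log k + o(log k)). -/
/-!
Since `log (1 + x) / x` is strictly decreasing on `(0, ∞)` (concavity of `log`), a positive root
`u` of `u = w log (1 + u)` is characterised by `a < w log (1 + a) ↔ a < u` for `a > 0`: this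
gives uniqueness, and existence follows from the intermediate value theorem.

For `w = k - 1` put `L = log (1 + u)`. Then `u > k - 1`, so `L ≥ log k`, and
`exp L = 1 + (k - 1) L ≤ k L`, so `L ≤ log k + log L`; as `log L = o(L)` this forces
`L ~ log k`. Moreover `1 ≤ (1 + 1/u)^(k-2) ≤ exp ((k - 2)/u) ≤ exp (1/L) → 1`, and the quantity
in the limit equals `1 / ((k - 1) log k) + (L / log k) (1 + 1/u)^(k-2)`.
-/

open Filter Real Set Topology

lemma strictAntiOn_log_one_add_div : StrictAntiOn (fun x : ℝ => log (1 + x) / x) (Ioi 0) := by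
  intro a (ha : 0 < a) b (hb : 0 < b) hab
  have h := strictConcaveOn_log_Ioi.secant_strict_mono (a := 1) (x := 1 + a) (y := 1 + b)
    (mem_Ioi.2 one_pos) (mem_Ioi.2 (by linarith)) (mem_Ioi.2 (by linarith))
    (by simpa using ha.ne') (by simpa using hb.ne') (by linarith)
  simpa using h

section RootOfMulLogOneAdd

variable {w u : ℝ}

lemma pos_of_eq_mul_log_one_add (hu : 0 < u) (hroot : u = w * log (1 + u)) : 0 < w :=
  pos_of_mul_pos_left (hroot ▸ hu) (log_pos (by linarith)).le

lemma lt_mul_log_one_add_iff {a : ℝ} (hu : 0 < u) (hroot : u = w * log (1 + u)) (ha : 0 < a) :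
    a < w * log (1 + a) ↔ a < u := by
  have hw := pos_of_eq_mul_log_one_add hu hroot
  have hslope : log (1 + u) / u = 1 / w := by
    rw [div_eq_div_iff hu.ne' hw.ne']; linarith
  rw [← strictAntiOn_log_one_add_div.lt_iff_gt hu ha, hslope, div_lt_div_iff₀ hw ha]
  constructor <;> intro h <;> linarith

lemma eq_of_eq_mul_log_one_add {v : ℝ} (hu : 0 < u) (hroot : u = w * log (1 + u)) (hv : 0 < v)
    (hvroot : v = w * log (1 + v)) : v = u := by
  refine le_antisymm (not_lt.1 fun h => ?_) (not_lt.1 fun h => ?_)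
  · exact (lt_mul_log_one_add_iff hv hvroot hu).2 h |>.ne hroot
  · exact (lt_mul_log_one_add_iff hu hroot hv).2 h |>.ne hvroot

lemma exists_pos_eq_mul_log_one_add (hw : 1 < w) : ∃ u, 0 < u ∧ u = w * log (1 + u) := by
  set c := w - 1 with hc_def
  set d := 4 * w * (w + 1) with hd_def
  have hc : 0 < c := by linarith
  have hcd : c ≤ d := by nlinarith
  have hfc : c < w * log (1 + c) :=
    calc c ≤ w * (2 * c / (c + 2)) := by
          rw [mul_div_assoc', le_div_iff₀ (by linarith)]; nlinarith
      _ < w * log (1 + c) := mul_lt_mul_of_pos_left (lt_log_one_add_of_pos hc) (by linarith)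
  have hfd : w * log (1 + d) < d := by
    have h := log_le_sub_one_of_pos (x := 2 * w + 1) (by linarith)
    rw [show 1 + d = (2 * w + 1) ^ 2 by ring, log_pow]
    push_cast
    nlinarith
  have hcont : ContinuousOn (fun x => w * log (1 + x) - x) (Icc c d) :=
    ((continuousOn_const.add continuousOn_id).log fun x hx =>
      (show (0 : ℝ) < 1 + x by linarith [hx.1]).ne')
      |>.const_smul w |>.sub continuousOn_id
  obtain ⟨u, hu, hfu⟩ := intermediate_value_Icc' hcd hcont
    (show (0 : ℝ) ∈ Icc (w * log (1 + d) - d) (w * log (1 + c) - c) from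
      ⟨by linarith, by linarith⟩)
  exact ⟨u, hc.trans_le hu.1, by linarith [show w * log (1 + u) - u = 0 from hfu]⟩

lemma existsUnique_pos_eq_mul_log_one_add (hw : 1 < w) :
    ∃! u, 0 < u ∧ u = w * log (1 + u) := by
  obtain ⟨u, hu, hroot⟩ := exists_pos_eq_mul_log_one_add hw
  exact ⟨u, ⟨hu, hroot⟩, fun v ⟨hv, hvroot⟩ =>
    eq_of_eq_mul_log_one_add hu hroot hv hvroot⟩

lemma lt_of_eq_mul_log_one_add (hu : 0 < u) (hroot : u = w * log (1 + u))
    (hw : 1 < log (1 + w)) : w < u := by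
  have hw0 := pos_of_eq_mul_log_one_add hu hroot
  exact (lt_mul_log_one_add_iff hu hroot hw0).1 (lt_mul_of_one_lt_right hw0 hw)

lemma log_one_add_le_log_one_add_add_log (hu : 0 < u) (hroot : u = w * log (1 + u))
    (hL : 1 ≤ log (1 + u)) : log (1 + u) ≤ log (1 + w) + log (log (1 + u)) := by
  have hw := pos_of_eq_mul_log_one_add hu hroot
  rw [← log_mul (by linarith) (by linarith)]
  refine (log_le_log_iff (by linarith) (by positivity)).2 ?_
  nlinarith

end RootOfMulLogOneAdd

lemma one_add_pow_le_exp_mul {x : ℝ} (hx : -1 ≤ x) (n : ℕ) : (1 + x) ^ n ≤ exp (n * x) := by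
  rw [exp_nat_mul]
  exact pow_le_pow_left₀ (by linarith) (by linarith [add_one_le_exp x]) n

lemma one_lt_log_of_three_le {x : ℝ} (hx : 3 ≤ x) : 1 < log x := by
  rw [lt_log_iff_exp_lt (by linarith)]
  linarith [exp_one_lt_d9]

lemma tendsto_div_of_le_of_le_add_log {α : Type*} {l : Filter α} {f g : α → ℝ}
    (hg : Tendsto g l atTop) (hgf : ∀ᶠ x in l, g x ≤ f x)
    (hfg : ∀ᶠ x in l, f x ≤ g x + log (f x)) : Tendsto (fun x => f x / g x) l (𝓝 1) := by
  have hf : Tendsto f l atTop := tendsto_atTop_mono' l hgf hg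
  have hlog : Tendsto (fun x => log (f x) / f x) l (𝓝 0) :=
    (isLittleO_log_id_atTop.comp_tendsto hf).tendsto_div_nhds_zero
  have hupper : Tendsto (fun x => 1 / (1 - log (f x) / f x)) l (𝓝 1) := by
    simpa using ((tendsto_const_nhds (x := (1 : ℝ))).sub hlog).inv₀ (by norm_num)
  refine tendsto_of_tendsto_of_tendsto_of_le_of_le' tendsto_const_nhds hupper ?_ ?_
  · filter_upwards [hgf, hg.eventually_gt_atTop 0] with x hx hx0
    rwa [one_le_div hx0]
  · filter_upwards [hgf, hfg, hg.eventually_gt_atTop 0] with x hx hxl hx0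
    have hf0 : 0 < f x := hx0.trans_le hx
    have hgap : 0 < f x - log (f x) := by linarith [log_le_sub_one_of_pos hf0]
    rw [one_sub_div hf0.ne', one_div_div]
    exact div_le_div_of_nonneg_left hf0.le hgap (by linarith)

lemma log_le_log_one_add_of_eq_sub_one_mul_log {k u : ℝ} (hk : 3 ≤ k) (hu : 0 < u)
    (hroot : u = (k - 1) * log (1 + u)) : log k ≤ log (1 + u) := by
  have h := lt_of_eq_mul_log_one_add hu hroot
    (by rw [add_sub_cancel]; exact one_lt_log_of_three_le hk)
  exact log_le_log (by linarith) (by linarith)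

section RootSequence

variable {u : ℕ → ℝ}

lemma eventually_log_le_log_one_add
    (hu : ∀ k : ℕ, 3 ≤ k → 0 < u k ∧ u k = ((k : ℝ) - 1) * log (1 + u k)) :
    ∀ᶠ k : ℕ in atTop, log k ≤ log (1 + u k) := by
  filter_upwards [eventually_ge_atTop 3] with k hk
  exact log_le_log_one_add_of_eq_sub_one_mul_log (by exact_mod_cast hk) (hu k hk).1 (hu k hk).2

lemma tendsto_log_one_add_div_log
    (hu : ∀ k : ℕ, 3 ≤ k → 0 < u k ∧ u k = ((k : ℝ) - 1) * log (1 + u k)) :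
    Tendsto (fun k : ℕ => log (1 + u k) / log k) atTop (𝓝 1) := by
  refine tendsto_div_of_le_of_le_add_log (tendsto_log_atTop.comp tendsto_natCast_atTop_atTop)
    (eventually_log_le_log_one_add hu) ?_
  filter_upwards [eventually_ge_atTop 3, eventually_log_le_log_one_add hu] with k hk hlow
  have h := log_one_add_le_log_one_add_add_log (hu k hk).1 (hu k hk).2
    (by linarith [one_lt_log_of_three_le (show (3 : ℝ) ≤ k by exact_mod_cast hk)])
  rwa [add_sub_cancel] at h

lemma tendsto_one_add_one_div_pow
    (hu : ∀ k : ℕ, 3 ≤ k → 0 < u k ∧ u k = ((k : ℝ) - 1) * log (1 + u k)) :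
    Tendsto (fun k : ℕ => (1 + 1 / u k) ^ (k - 2)) atTop (𝓝 1) := by
  have hL : Tendsto (fun k : ℕ => log (1 + u k)) atTop atTop :=
    tendsto_atTop_mono' _ (eventually_log_le_log_one_add hu)
      (tendsto_log_atTop.comp tendsto_natCast_atTop_atTop)
  have hupper : Tendsto (fun k : ℕ => exp (1 / log (1 + u k))) atTop (𝓝 1) := by
    simpa [Function.comp_def] using
      (continuous_exp.tendsto 0).comp ((tendsto_const_nhds (x := (1 : ℝ))).div_atTop hL)
  refine tendsto_of_tendsto_of_tendsto_of_le_of_le' tendsto_const_nhds hupper ?_ ?_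
  · filter_upwards [eventually_ge_atTop 3] with k hk
    exact one_le_pow₀ (le_add_of_nonneg_right (one_div_pos.2 (hu k hk).1).le)
  · filter_upwards [eventually_ge_atTop 3] with k hk
    obtain ⟨hu0, hroot⟩ := hu k hk
    have hL0 : 0 < log (1 + u k) := log_pos (by linarith)
    have hcast : ((k - 2 : ℕ) : ℝ) ≤ (k : ℝ) - 1 := by
      rw [Nat.cast_sub (by omega)]; push_cast; linarith
    calc (1 + 1 / u k) ^ (k - 2) ≤ exp ((k - 2 : ℕ) * (1 / u k)) :=
          one_add_pow_le_exp_mul (by linarith [one_div_pos.2 hu0]) _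
      _ ≤ exp (1 / log (1 + u k)) := by
          gcongr
          rw [mul_one_div, div_le_div_iff₀ hu0 hL0]
          nlinarith

end RootSequence

theorem stmt11 (Ωf : ℕ → ℝ) (hΩ : ∀ k, 0 < Ωf k) :
    -- unique positive solution of u = (k-1) log(1+u)
    (∀ k : ℕ, 3 ≤ k →
      ∃! u : ℝ, 0 < u ∧ u = ((k : ℝ) - 1) * Real.log (1 + u)) ∧
    -- α* = (Ω_k/k)(log k + o(log k)), i.e. α* k/(Ω_k log k) → 1
    (∀ u : ℕ → ℝ,
      (∀ k : ℕ, 3 ≤ k → 0 < u k ∧ u k = ((k : ℝ) - 1) * Real.log (1 + u k)) →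
      Tendsto (fun k : ℕ =>
          (Ωf k * (1 + u k * (1 + 1 / u k) ^ (k - 2)) / ((k : ℝ) * ((k : ℝ) - 1)))
            * (k : ℝ) / (Ωf k * Real.log k))
        atTop (nhds 1)) := by
  refine ⟨fun k hk => existsUnique_pos_eq_mul_log_one_add ?_, fun u hu => ?_⟩
  · linarith [show (3 : ℝ) ≤ k by exact_mod_cast hk]
  have hsplit : ∀ᶠ k : ℕ in atTop,
      1 / (((k : ℝ) - 1) * log k) + log (1 + u k) / log k * (1 + 1 / u k) ^ (k - 2) =
        (Ωf k * (1 + u k * (1 + 1 / u k) ^ (k - 2)) / ((k : ℝ) * ((k : ℝ) - 1))) * (k : ℝ) /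
          (Ωf k * log k) := by
    filter_upwards [eventually_ge_atTop 3] with k hk
    have hk' : (3 : ℝ) ≤ k := by exact_mod_cast hk
    have hlog : log k ≠ 0 := (zero_lt_one.trans (one_lt_log_of_three_le hk')).ne'
    have hk1 : (k : ℝ) - 1 ≠ 0 := by linarith
    have hk0 : (k : ℝ) ≠ 0 := by linarith
    have hΩ0 := (hΩ k).ne'
    set P := (1 + 1 / u k) ^ (k - 2)
    rw [show u k * P = ((k : ℝ) - 1) * log (1 + u k) * P by rw [← (hu k hk).2]]
    field_simp
  have hdenom : Tendsto (fun k : ℕ => ((k : ℝ) - 1) * log k) atTop atTop :=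
    (tendsto_atTop_add_const_right _ (-1) tendsto_natCast_atTop_atTop).atTop_mul_atTop₀
      (tendsto_log_atTop.comp tendsto_natCast_atTop_atTop)
  have hlim := ((tendsto_const_nhds (x := (1 : ℝ))).div_atTop hdenom).add
    ((tendsto_log_one_add_div_log hu).mul (tendsto_one_add_one_div_pow hu))
  simpa using hlim.congr' hsplit
end

section
/- For any probability vector w ∈ ℝ^q (nonnegative entries summing to 1) with ‖w - w̄‖² > ε, where w̄ is the uniform vector (1/q,...,1/q), and any α > 0: H(w) + α E(w) ≤ H(w̄) + α E(w̄) - αε/(2(1-1/q)), where H(w) = -Σᵢ wᵢ log wᵢ and E(w) = log(1 - Σᵢ wᵢ²). -/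
open Finset

theorem stmt13 (q : ℕ) (hq : 2 ≤ q) (w : Fin q → ℝ)
    (hw0 : ∀ i, 0 ≤ w i) (hw1 : ∑ i, w i = 1)
    (ε α : ℝ) (hε : 0 < ε) (hα : 0 < α)
    (hdev : ε < ∑ i, (w i - 1 / q) ^ 2)
    (hlt : ∑ i, (w i) ^ 2 < 1) :
    (-∑ i, w i * Real.log (w i)) + α * Real.log (1 - ∑ i, (w i) ^ 2)
      ≤ Real.log q + α * Real.log (1 - 1 / q) - α * ε / (2 * (1 - 1 / q)) := by
  have hq0 : (0:ℝ) < q := by positivity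
  have hq1 : (2:ℝ) ≤ q := by exact_mod_cast hq
  have hc : (0:ℝ) < 1 - 1/q := by
    rw [sub_pos, div_lt_one hq0]; linarith
  -- deviation identity
  have hdev' : ε < (∑ i, (w i)^2) - 1/q := by
    have hid : ∑ i, (w i - 1/q)^2
        = (∑ i, (w i)^2) - 2/q * (∑ i, w i) + (q:ℝ) * (1/q)^2 := by
      rw [Finset.sum_congr rfl (fun i _ => by ring :
        ∀ i ∈ Finset.univ, (w i - 1/q)^2 = (w i)^2 - 2/q*(w i) + (1/q)^2)]
      rw [Finset.sum_add_distrib, Finset.sum_sub_distrib, ← Finset.mul_sum,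
        Finset.sum_const, Finset.card_univ, Fintype.card_fin, nsmul_eq_mul]
    rw [hid, hw1] at hdev
    have h2 : (q:ℝ) * (1/q)^2 = 1/q := by field_simp
    have h3 : (2:ℝ)/q * 1 = 1/q + 1/q := by ring
    rw [h2, h3] at hdev
    linarith
  have hSpos : 0 < 1 - ∑ i, (w i)^2 := by linarith
  -- entropy bound
  have hH : (-∑ i, w i * Real.log (w i)) ≤ Real.log q := by
    have key : ∀ i : Fin q, -(w i * Real.log (w i)) - w i * Real.log q ≤ 1/q - w i := by
      intro i
      rcases eq_or_lt_of_le (hw0 i) with h | h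
      · have h0 : (0:ℝ) ≤ 1/q := by positivity
        rw [← h]; simpa using h0
      · have hy : 0 < w i * q := by positivity
        have hlog := Real.log_le_sub_one_of_pos (show (0:ℝ) < 1/(w i * q) by positivity)
        rw [Real.log_div one_ne_zero (ne_of_gt hy), Real.log_one,
            Real.log_mul (ne_of_gt h) (ne_of_gt hq0)] at hlog
        have hm := mul_le_mul_of_nonneg_left hlog (le_of_lt h)
        have heq : w i * (1/(w i * q) - 1) = 1/q - w i := by field_simp
        nlinarith
    have hsum := Finset.sum_le_sum (fun i (_ : i ∈ Finset.univ) => key i)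
    rw [Finset.sum_sub_distrib, Finset.sum_neg_distrib, ← Finset.sum_mul, hw1,
        Finset.sum_sub_distrib, Finset.sum_const, Finset.card_univ, Fintype.card_fin,
        nsmul_eq_mul] at hsum
    have h1 : (q:ℝ) * (1/(q:ℝ)) = 1 := by field_simp
    rw [h1] at hsum
    linarith
  -- energy bound
  have hE : Real.log (1 - ∑ i, (w i)^2) ≤ Real.log (1 - 1/q) - ε / (2 * (1 - 1/q)) := by
    have hcε : 0 < (1 - 1/(q:ℝ)) - ε := by linarith
    have h1 : Real.log (1 - ∑ i, (w i)^2) ≤ Real.log ((1 - 1/q) - ε) :=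
      Real.log_le_log hSpos (by linarith)
    have h2 : Real.log ((1 - 1/(q:ℝ)) - ε) - Real.log (1 - 1/q)
        = Real.log (((1 - 1/q) - ε)/(1 - 1/q)) :=
      (Real.log_div (ne_of_gt hcε) (ne_of_gt hc)).symm
    have h3 : Real.log (((1 - 1/(q:ℝ)) - ε)/(1 - 1/q)) ≤ ((1 - 1/q) - ε)/(1 - 1/q) - 1 :=
      Real.log_le_sub_one_of_pos (by positivity)
    have h4 : ((1 - 1/(q:ℝ)) - ε)/(1 - 1/q) = 1 - ε/(1 - 1/q) := by
      rw [sub_div, div_self (ne_of_gt hc)]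
    have h5 : ε / (2 * (1 - 1/(q:ℝ))) ≤ ε / (1 - 1/q) := by
      apply div_le_div_of_nonneg_left (le_of_lt hε) hc; linarith
    linarith
  have hαE := mul_le_mul_of_nonneg_left hE (le_of_lt hα)
  have hrw : α * ε / (2 * (1 - 1/(q:ℝ))) = α * (ε / (2 * (1 - 1/q))) := by ring
  rw [hrw]
  nlinarith
end

section
/- For any q×q matrix v with nonnegative entries summing to 1, uniform matrix v̄ with all entries 1/q², row-marginal deviation ‖(v-v̄)1‖² ≤ δ, column-marginal deviation ‖1ᵗ(v-v̄)‖² ≤ δ, and ‖v-v̄‖² ≥ ε > 2δ, and any 0 < α < κ where κ satisfies sup over such v of [H(v)+κE(v)] ≤ H(v̄)+κE(v̄): H(v) + αE(v) ≤ H(v̄) + αE(v̄) - ((κ-α)/(2(1-1/q)²))(ε - 2δ). -/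
open Finset

/-- Entropy H(v) = -Σ_{i,j} v(i,j) log v(i,j). -/
noncomputable def matH (q : ℕ) (v : Fin q → Fin q → ℝ) : ℝ :=
  -∑ i, ∑ j, v i j * Real.log (v i j)

/-- Argument of the energy: 1 - Σᵢ rᵢ² - Σⱼ cⱼ² + Σ_{i,j} v(i,j)². -/
noncomputable def matEArg (q : ℕ) (v : Fin q → Fin q → ℝ) : ℝ :=
  1 - (∑ i, (∑ j, v i j) ^ 2) - (∑ j, (∑ i, v i j) ^ 2) + ∑ i, ∑ j, (v i j) ^ 2

/-- Energy E(v) = log(1 - Σᵢ rᵢ² - Σⱼ cⱼ² + Σ_{i,j} v(i,j)²). -/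
noncomputable def matE (q : ℕ) (v : Fin q → Fin q → ℝ) : ℝ :=
  Real.log (matEArg q v)

/-- The uniform q×q matrix with all entries 1/q². -/
noncomputable def unifMat (q : ℕ) : Fin q → Fin q → ℝ := fun _ _ => 1 / (q : ℝ) ^ 2

/-- Expansion of a shifted sum of squares. -/
lemma shift_sum (n : ℕ) (f : Fin n → ℝ) (a : ℝ) :
    ∑ i, (f i - a) ^ 2 = (∑ i, (f i) ^ 2) - 2 * a * (∑ i, f i) + n * a ^ 2 := by
  have h : ∀ i : Fin n, (f i - a) ^ 2 = (f i) ^ 2 - 2 * a * f i + a ^ 2 := fun i => by ring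
  rw [Finset.sum_congr rfl fun i _ => h i, Finset.sum_add_distrib, Finset.sum_sub_distrib,
    ← Finset.mul_sum, Finset.sum_const, Finset.card_univ, Fintype.card_fin, nsmul_eq_mul]

theorem stmt14 (q : ℕ) (hq : 2 ≤ q) (v : Fin q → Fin q → ℝ)
    (hv0 : ∀ i j, 0 ≤ v i j) (hv1 : ∑ i, ∑ j, v i j = 1)
    (δ ε κ α : ℝ)
    (hrow : ∑ i, ((∑ j, v i j) - 1 / q) ^ 2 ≤ δ)
    (hcol : ∑ j, ((∑ i, v i j) - 1 / q) ^ 2 ≤ δ)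
    (hdev : ε ≤ ∑ i, ∑ j, (v i j - 1 / (q : ℝ) ^ 2) ^ 2)
    (hεδ : 2 * δ < ε) (hα : 0 < α) (hακ : α < κ)
    (harg : 0 < matEArg q v)
    (hκ : ∀ v' : Fin q → Fin q → ℝ, (∀ i j, 0 ≤ v' i j) →
      (∑ i, ∑ j, v' i j = 1) →
      (∑ i, ((∑ j, v' i j) - 1 / q) ^ 2 ≤ δ) →
      (∑ j, ((∑ i, v' i j) - 1 / q) ^ 2 ≤ δ) →
      (ε ≤ ∑ i, ∑ j, (v' i j - 1 / (q : ℝ) ^ 2) ^ 2) →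
      (0 < matEArg q v') →
      matH q v' + κ * matE q v' ≤ matH q (unifMat q) + κ * matE q (unifMat q)) :
    matH q v + α * matE q v
      ≤ matH q (unifMat q) + α * matE q (unifMat q)
        - (κ - α) / (2 * (1 - 1 / q) ^ 2) * (ε - 2 * δ) := by
  have hq2 : (2 : ℝ) ≤ q := by exact_mod_cast hq
  have hqpos : (0 : ℝ) < q := by linarith
  have hq0 : (q : ℝ) ≠ 0 := ne_of_gt hqpos
  have hv1' : ∑ j, ∑ i, v i j = 1 := by rw [Finset.sum_comm]; exact hv1
  -- 1/q ≤ 1/2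
  have hinv : 1 / (q : ℝ) ≤ 1 / 2 := by
    rw [div_le_div_iff₀ hqpos (by norm_num)]; linarith
  have h12 : (1 : ℝ) / 2 ≤ 1 - 1 / q := by linarith
  have hc : (0 : ℝ) < (1 - 1 / (q : ℝ)) ^ 2 := by positivity
  -- expansions
  have e1 : ∑ i, ((∑ j, v i j) - 1 / (q : ℝ)) ^ 2 = (∑ i, (∑ j, v i j) ^ 2) - 1 / q := by
    rw [shift_sum q _ (1 / q), hv1]; field_simp; ring
  have e2 : ∑ j, ((∑ i, v i j) - 1 / (q : ℝ)) ^ 2 = (∑ j, (∑ i, v i j) ^ 2) - 1 / q := by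
    rw [shift_sum q _ (1 / q), hv1']; field_simp; ring
  have e3 : ∑ i, ∑ j, (v i j - 1 / (q : ℝ) ^ 2) ^ 2
      = (∑ i, ∑ j, (v i j) ^ 2) - 1 / q ^ 2 := by
    have h1 : ∀ i : Fin q, ∑ j, (v i j - 1 / (q : ℝ) ^ 2) ^ 2
        = (∑ j, (v i j) ^ 2) - 2 * (1 / q ^ 2) * (∑ j, v i j) + q * (1 / q ^ 2) ^ 2 :=
      fun i => shift_sum q (v i) _
    rw [Finset.sum_congr rfl fun i _ => h1 i, Finset.sum_add_distrib, Finset.sum_sub_distrib,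
      ← Finset.mul_sum, hv1, Finset.sum_const, Finset.card_univ, Fintype.card_fin, nsmul_eq_mul]
    field_simp; ring
  have hmE : matEArg q v = 1 - (∑ i, (∑ j, v i j) ^ 2) - (∑ j, (∑ i, v i j) ^ 2)
      + ∑ i, ∑ j, (v i j) ^ 2 := rfl
  have hsq : (1 - 1 / (q : ℝ)) ^ 2 = 1 - 2 / q + 1 / q ^ 2 := by field_simp; ring
  -- lower bound on matEArg
  have hlow : (1 - 1 / (q : ℝ)) ^ 2 + (ε - 2 * δ) ≤ matEArg q v := by
    rw [hmE, hsq]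
    have : ε ≤ (∑ i, ∑ j, (v i j) ^ 2) - 1 / q ^ 2 := by rw [← e3]; exact hdev
    have hr' : (∑ i, (∑ j, v i j) ^ 2) - 1 / q ≤ δ := by rw [← e1]; exact hrow
    have hc' : (∑ j, (∑ i, v i j) ^ 2) - 1 / q ≤ δ := by rw [← e2]; exact hcol
    have h2q : (2 : ℝ) / q = 2 * (1 / q) := by ring
    rw [h2q]
    linarith
  -- upper bound on matEArg
  have hub : matEArg q v ≤ 1 - 1 / q := by
    have h1 : ∀ i : Fin q, ∑ j, (v i j) ^ 2 ≤ (∑ j, v i j) ^ 2 :=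
      fun i => Finset.sum_sq_le_sq_sum_of_nonneg (fun j _ => hv0 i j)
    have h3 : ∑ i, ∑ j, (v i j) ^ 2 ≤ ∑ i, (∑ j, v i j) ^ 2 :=
      Finset.sum_le_sum fun i _ => h1 i
    have h2 : (1 : ℝ) ≤ q * ∑ j, (∑ i, v i j) ^ 2 := by
      have h := sq_sum_le_card_mul_sum_sq (s := (Finset.univ : Finset (Fin q)))
        (f := fun j => ∑ i, v i j)
      rw [hv1', Finset.card_univ, Fintype.card_fin] at h
      simpa using h
    have h2' : 1 / (q : ℝ) ≤ ∑ j, (∑ i, v i j) ^ 2 := by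
      rw [div_le_iff₀ hqpos]; linarith
    rw [hmE]; linarith
  -- value at the uniform matrix
  have hEunif : matEArg q (unifMat q) = (1 - 1 / (q : ℝ)) ^ 2 := by
    unfold matEArg unifMat
    simp only [Finset.sum_const, Finset.card_univ, Fintype.card_fin, nsmul_eq_mul]
    field_simp; ring
  set S := matEArg q v with hSdef
  set c := (1 - 1 / (q : ℝ)) ^ 2 with hcdef
  have hScS : c < S := by linarith
  have hS2c : S ≤ 2 * c := by
    have hnn : (0:ℝ) ≤ 1 - 1 / (q:ℝ) := by linarith
    have h := mul_le_mul_of_nonneg_left h12 hnn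
    have hcc : (1 - 1/(q:ℝ)) * (1 - 1/(q:ℝ)) = c := by rw [hcdef]; ring
    linarith
  -- log estimate
  have hlog : (ε - 2 * δ) / (2 * c) ≤ Real.log S - Real.log c := by
    have hkey : Real.log c - Real.log S ≤ (c - S) / S := by
      have h := Real.log_le_sub_one_of_pos (show (0 : ℝ) < c / S by positivity)
      rw [Real.log_div (ne_of_gt hc) (ne_of_gt harg)] at h
      have : c / S - 1 = (c - S) / S := by field_simp
      linarith [this ▸ h]
    have hfrac : (ε - 2 * δ) / (2 * c) ≤ (S - c) / S := by
      rw [div_le_div_iff₀ (by positivity) harg]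
      have ha : ε - 2 * δ ≤ S - c := by linarith
      have hb : (ε - 2 * δ) * S ≤ (S - c) * S := mul_le_mul_of_nonneg_right ha harg.le
      have hcc : (S - c) * S ≤ (S - c) * (2 * c) := mul_le_mul_of_nonneg_left hS2c (by linarith)
      linarith
    have hneg : (c - S) / S = -((S - c) / S) := by ring
    linarith
  -- assemble
  have hκv := hκ v hv0 hv1 hrow hcol hdev harg
  have hE : matE q (unifMat q) + (ε - 2 * δ) / (2 * c) ≤ matE q v := by
    unfold matE
    rw [hEunif]
    linarith [hlog]
  have hκα : (0 : ℝ) ≤ κ - α := by linarith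
  have hmul := mul_le_mul_of_nonneg_left hE hκα
  have hring : (κ - α) / (2 * (1 - 1 / (q : ℝ)) ^ 2) * (ε - 2 * δ)
      = (κ - α) * ((ε - 2 * δ) / (2 * c)) := by rw [hcdef]; ring
  rw [hring]
  linarith [hmul, hκv]
end
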